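/- arXiv:1906.07416 — 2 statements merged into one kernel-verified Lean document; each statement's English description precedes it below -/
import Mathlib

section
/- Suppose e1, e2 : ℝ → ℝ are differentiable with e1' = -c1·e1 + e2 and e2' = -c2·e2 - e1 for constants c1, c2 > 0. Then V(t) = (e1(t)² + e2(t)²)/2 satisfies V'(t) = -c1·e1(t)² - c2·e2(t)² ≤ 0 for all t, and e1(t)² + e2(t)² → 0 as t → ∞. -/
open Filter Set Real Topology

/-!
The coupling terms `+e₂` in `e₁'` and `-e₁` in `e₂'` are skew, so they cancel in the derivative
of the energy `W = e₁² + e₂²`, leaving `W' = -2 (c₁ e₁² + c₂ e₂²) ≤ -2 min(c₁, c₂) W`.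
Grönwall's inequality then gives `W t ≤ W 0 · exp (-2 min(c₁, c₂) t)`, which tends to `0`.
-/

theorem hasDerivAt_sq_add_sq_of_skew_coupled {c1 c2 : ℝ} {e1 e2 : ℝ → ℝ}
    (h1 : ∀ t, HasDerivAt e1 (-c1 * e1 t + e2 t) t)
    (h2 : ∀ t, HasDerivAt e2 (-c2 * e2 t - e1 t) t) (t : ℝ) :
    HasDerivAt (fun s => e1 s ^ 2 + e2 s ^ 2) (-2 * (c1 * e1 t ^ 2 + c2 * e2 t ^ 2)) t :=
  (((h1 t).fun_pow 2).add ((h2 t).fun_pow 2)).congr_deriv (by ring)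

theorem min_mul_sq_add_sq_le (c1 c2 x y : ℝ) :
    min c1 c2 * (x ^ 2 + y ^ 2) ≤ c1 * x ^ 2 + c2 * y ^ 2 := by
  have hx := mul_le_mul_of_nonneg_right (min_le_left c1 c2) (sq_nonneg x)
  have hy := mul_le_mul_of_nonneg_right (min_le_right c1 c2) (sq_nonneg y)
  linarith

theorem le_mul_exp_of_hasDerivAt_le_mul {W W' : ℝ → ℝ} {K : ℝ}
    (hW : ∀ t, HasDerivAt W (W' t) t) (hle : ∀ t, W' t ≤ K * W t) {t : ℝ} (ht : 0 ≤ t) :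
    W t ≤ W 0 * exp (K * t) := by
  have hcont : Continuous W := continuous_iff_continuousAt.2 fun s => (hW s).continuousAt
  have := le_gronwallBound_of_liminf_deriv_right_le (f' := W') (ε := 0) hcont.continuousOn
    (fun s _ _ hr => (hW s).hasDerivWithinAt.liminf_right_slope_le hr) le_rfl
    (fun s _ => by simpa using hle s) t ⟨ht, le_rfl⟩
  rwa [sub_zero, gronwallBound_ε0] at this

theorem tendsto_zero_of_hasDerivAt_le_neg_mul {W W' : ℝ → ℝ} {k : ℝ} (hk : 0 < k)
    (hW : ∀ t, HasDerivAt W (W' t) t) (hle : ∀ t, W' t ≤ -k * W t) (hW_nonneg : ∀ t, 0 ≤ W t) :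
    Tendsto W atTop (𝓝 0) := by
  have hexp : Tendsto (fun t => W 0 * exp (-k * t)) atTop (𝓝 0) := by
    simpa using (tendsto_exp_atBot.comp
      (tendsto_id.const_mul_atTop_of_neg (neg_lt_zero.2 hk))).const_mul (W 0)
  refine tendsto_of_tendsto_of_tendsto_of_le_of_le' tendsto_const_nhds hexp
    (Eventually.of_forall hW_nonneg) ?_
  filter_upwards [eventually_ge_atTop 0] with t ht
  exact le_mul_exp_of_hasDerivAt_le_mul hW hle ht

theorem backstepping_lyapunov (c1 c2 : ℝ) (hc1 : 0 < c1) (hc2 : 0 < c2)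
    (e1 e2 : ℝ → ℝ)
    (h1 : ∀ t, HasDerivAt e1 (-c1 * e1 t + e2 t) t)
    (h2 : ∀ t, HasDerivAt e2 (-c2 * e2 t - e1 t) t) :
    (∀ t, HasDerivAt (fun s => (e1 s ^ 2 + e2 s ^ 2) / 2)
        (-c1 * e1 t ^ 2 - c2 * e2 t ^ 2) t ∧
        -c1 * e1 t ^ 2 - c2 * e2 t ^ 2 ≤ 0) ∧
    Tendsto (fun t => e1 t ^ 2 + e2 t ^ 2) atTop (nhds 0) := by
  have hW := hasDerivAt_sq_add_sq_of_skew_coupled h1 h2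
  refine ⟨fun t => ⟨((hW t).div_const 2).congr_deriv (by ring), ?_⟩, ?_⟩
  · linarith [mul_nonneg hc1.le (sq_nonneg (e1 t)), mul_nonneg hc2.le (sq_nonneg (e2 t))]
  · refine tendsto_zero_of_hasDerivAt_le_neg_mul (mul_pos two_pos (lt_min hc1 hc2)) hW
      (fun t => ?_) (fun t => by positivity)
    linarith [min_mul_sq_add_sq_le c1 c2 (e1 t) (e2 t)]
end

section
/- Let x1, x2 : ℝ → ℝ be differentiable with x1' = x2 and x2' = -k1·x2 - k1·k2·sat((x1 - r_c)/k3), where k1, k2, k3, r_c > 0. Then V3(t) = k1·k2·∫_{r_c}^{x1(t)} sat((τ - r_c)/k3) dτ + x2(t)²/2 satisfies V3'(t) = -k1·x2(t)² ≤ 0 for all t. -/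
/-! The potential term has derivative `k1 k2 sat((x1 - r_c)/k3) · x2` by the fundamental theorem
of calculus (`sat` is continuous), which cancels the forcing term in `d/dt (x2²/2)`, leaving only
the damping `-k1 x2²`. -/

noncomputable def sat (η : ℝ) : ℝ := if |η| < 1 then η else Real.sign η

lemma sat_eq_max_min (η : ℝ) : sat η = max (-1) (min 1 η) := by
  unfold sat
  split_ifs with h
  · obtain ⟨hlo, hhi⟩ := abs_lt.1 h
    rw [min_eq_right hhi.le, max_eq_right hlo.le]
  · rcases le_abs'.1 (not_lt.1 h) with hneg | hpos
    · rw [Real.sign_of_neg (by linarith), min_eq_right (by linarith), max_eq_left (by linarith)]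
    · rw [Real.sign_of_pos (by linarith), min_eq_left hpos, max_eq_right (by linarith)]

lemma continuous_sat : Continuous sat := by
  rw [show sat = fun η => max (-1) (min 1 η) from funext sat_eq_max_min]
  fun_prop

lemma hasDerivAt_energy_of_damped {g : ℝ → ℝ} (hg : Continuous g) (a c K : ℝ)
    {x1 x2 : ℝ → ℝ} {t : ℝ} (h1 : HasDerivAt x1 (x2 t) t)
    (h2 : HasDerivAt x2 (-c * x2 t - K * g (x1 t)) t) :
    HasDerivAt (fun s => K * (∫ τ in a..(x1 s), g τ) + x2 s ^ 2 / 2) (-c * x2 t ^ 2) t := by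
  have hpot : HasDerivAt (fun y => ∫ τ in a..y, g τ) (g (x1 t)) (x1 t) :=
    intervalIntegral.integral_hasDerivAt_right (hg.intervalIntegrable _ _)
      (hg.stronglyMeasurableAtFilter _ _) hg.continuousAt
  have hkin : HasDerivAt (fun s => x2 s ^ 2 / 2) (x2 t * (-c * x2 t - K * g (x1 t))) t :=
    ((h2.pow 2).div_const 2).congr_deriv (by ring)
  exact (((hpot.comp t h1).const_mul K).add hkin).congr_deriv (by ring)

theorem V3_decrease_general (k1 k2 k3 r_c : ℝ)
    (hk1 : 0 < k1)
    (x1 x2 : ℝ → ℝ)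
    (h1 : ∀ t, HasDerivAt x1 (x2 t) t)
    (h2 : ∀ t, HasDerivAt x2 (-k1 * x2 t - k1 * k2 * sat ((x1 t - r_c) / k3)) t) :
    ∀ t, HasDerivAt
        (fun s => k1 * k2 * (∫ τ in r_c..(x1 s), sat ((τ - r_c) / k3)) + x2 s ^ 2 / 2)
        (-k1 * x2 t ^ 2) t ∧ -k1 * x2 t ^ 2 ≤ 0 := by
  intro t
  have hg : Continuous fun τ => sat ((τ - r_c) / k3) := continuous_sat.comp (by fun_prop)
  exact ⟨hasDerivAt_energy_of_damped hg r_c k1 (k1 * k2) (h1 t) (h2 t),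
    mul_nonpos_of_nonpos_of_nonneg (neg_nonpos.2 hk1.le) (sq_nonneg _)⟩

theorem V3_decrease (k1 k2 k3 r_c : ℝ)
    (hk1 : 0 < k1) (hk2 : 0 < k2) (hk3 : 0 < k3) (hr : 0 < r_c)
    (x1 x2 : ℝ → ℝ)
    (h1 : ∀ t, HasDerivAt x1 (x2 t) t)
    (h2 : ∀ t, HasDerivAt x2 (-k1 * x2 t - k1 * k2 * sat ((x1 t - r_c) / k3)) t) :
    ∀ t, HasDerivAt
        (fun s => k1 * k2 * (∫ τ in r_c..(x1 s), sat ((τ - r_c) / k3)) + x2 s ^ 2 / 2)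
        (-k1 * x2 t ^ 2) t ∧ -k1 * x2 t ^ 2 ≤ 0 :=
  V3_decrease_general k1 k2 k3 r_c hk1 x1 x2 h1 h2
end
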